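/- Let P = conv(u_0, u_1, u_2, u_3) ⊆ ℝ^3 be a full-dimensional lattice simplex with lattice length l(P) ≥ 2, and suppose l_{01} = l_{02} = 3 and l_{03} is odd. Let S = {i ∈ {0, 1, 2} : l_{i3} ≠ 2}. Then the 3-dilations P_{i,3} are defined for all i ∈ S (in particular 3 divides l_{12}, l_{03} ≥ 3, and l_{i3} ≥ 3 for i ∈ S), and P = (⋃_{i∈S} P_{i,3}) ∪ P_{3,2}. -/

import Mathlib

open Finset Pointwise

noncomputable section

/-- The real point corresponding to a lattice point. -/
def toR {n : ℕ} (v : Fin n → ℤ) : Fin n → ℝ := fun x => (v x : ℝ)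

/-- The lattice simplex (as a subset of `ℝ^n`) with the given lattice vertices. -/
def lsimplex {n m : ℕ} (u : Fin m → Fin n → ℤ) : Set (Fin n → ℝ) :=
  convexHull ℝ (Set.range fun i => toR (u i))

/-- The lattice length `l_{ij}` of the edge `u_i u_j`:
the gcd of the coordinates of `u_j - u_i`. -/
def latLen {n m : ℕ} (u : Fin m → Fin n → ℤ) (i j : Fin m) : ℕ :=
  Finset.univ.gcd fun x => (u j x - u i x).natAbs

/-- `r_{ij,k}`: the least nonnegative residue of `l_{ij}` modulo `k`. -/
def rmod {n m : ℕ} (u : Fin m → Fin n → ℤ) (i j : Fin m) (k : ℕ) : ℕ :=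
  latLen u i j % k

/-- The vertices of the `k`-dilation `P_{i,k}`: the vertex `u_i` together with, for `j ≠ i`,
the points `((l_{ij} - r_{ij,k})/l_{ij})·u_j + (r_{ij,k}/l_{ij})·u_i`. -/
def dilVert {n m : ℕ} (u : Fin m → Fin n → ℤ) (i : Fin m) (k : ℕ) (j : Fin m) :
    Fin n → ℝ :=
  if j = i then toR (u i)
  else
    ((((latLen u i j : ℝ) - (rmod u i j k : ℝ)) / (latLen u i j : ℝ)) • toR (u j))
      + (((rmod u i j k : ℝ) / (latLen u i j : ℝ)) • toR (u i))

/-- The `k`-dilation `P_{i,k}`. -/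
def dil {n m : ℕ} (u : Fin m → Fin n → ℤ) (i : Fin m) (k : ℕ) : Set (Fin n → ℝ) :=
  convexHull ℝ (Set.range (dilVert u i k))

/-- The primitive edge vector `ũ_{ij} = (u_j - u_i)/l_{ij}`. -/
def primVec {n m : ℕ} (u : Fin m → Fin n → ℤ) (i j : Fin m) : Fin n → ℝ :=
  (latLen u i j : ℝ)⁻¹ • (toR (u j) - toR (u i))

/-- The translated `k`-dilation `P_{i,k,t} = P_{i,k} + Σ_{j ≠ i} t_j ũ_{ij}`. -/
def dilT {n m : ℕ} (u : Fin m → Fin n → ℤ) (i : Fin m) (k : ℕ) (t : Fin m → ℕ) :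
    Set (Fin n → ℝ) :=
  (fun y => y + ∑ j ∈ Finset.univ.erase i, (t j : ℝ) • primVec u i j) '' dil u i k

/-!
Write a point of `P` in barycentric coordinates `x = ∑ w_j u_j`. Since `P_{i,k} - u_i` is the
simplex on the edge vectors `u_j - u_i` shrunk by the factors `(l_{ij} - r_{ij,k}) / l_{ij}`, the
point lies in `P_{i,k}` as soon as `∑_{j ≠ i} w_j l_{ij} / (l_{ij} - r_{ij,k}) ≤ 1`.

All edges among `u_0, u_1, u_2` have length divisible by `3`, so for `i ∈ S` the only edge of
`P_{i,3}` that is really shrunk is the one towards `u_3`, and `x ∈ P_{i,3}` as soon as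
`r_{i3,3} w_3 ≤ (l_{i3} - r_{i3,3}) w_i`. If this fails for every `i ∈ S`, then every odd edge
`u_3 u_j` has `j ∈ S` and so gives `3 w_j ≤ (l_{3j} - 1) w_3`, because `3 r ≤ (l - 1)(l - r)` for
odd `l ≥ 3` and `r = l mod 3`. Summing over the three edges at `u_3` gives the criterion for
`P_{3,2}`.
-/

section Convex

variable {ι E : Type*} [Fintype ι] [AddCommGroup E] [Module ℝ E]

theorem convexHull_range_eq_image_stdSimplex (v : ι → E) :
    convexHull ℝ (Set.range v) = (fun w => ∑ i, w i • v i) '' stdSimplex ℝ ι := by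
  classical
  have hL : (fun w : ι → ℝ => ∑ i, w i • v i) = Fintype.linearCombination ℝ v :=
    funext fun w => (Fintype.linearCombination_apply ℝ v w).symm
  rw [← convexHull_rangle_single_eq_stdSimplex, hL, LinearMap.image_convexHull, ← Set.range_comp]
  congr 2
  ext i
  simp [Fintype.linearCombination_apply_single]

theorem sum_smul_eq_add_sum_smul_sub [DecidableEq ι] (p : ι → E) (i : ι) {w : ι → ℝ}
    (hw : ∑ j, w j = 1) :
    ∑ j, w j • p j = p i + ∑ j ∈ univ.erase i, w j • (p j - p i) := by
  rw [sum_erase _ (by simp), sum_congr rfl fun j _ => smul_sub (w j) (p j) (p i), sum_sub_distrib,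
    ← sum_smul, hw, one_smul, add_sub_cancel]

theorem add_sum_smul_sub_mem_convexHull [DecidableEq ι] (q : ι → E) (i : ι) {μ : ι → ℝ}
    (h0 : ∀ j, j ≠ i → 0 ≤ μ j) (h1 : ∑ j ∈ univ.erase i, μ j ≤ 1) :
    q i + ∑ j ∈ univ.erase i, μ j • (q j - q i) ∈ convexHull ℝ (Set.range q) := by
  set w := Function.update μ i (1 - ∑ j ∈ univ.erase i, μ j)
  have hw : ∀ j ∈ univ.erase i, w j = μ j := fun j hj =>
    Function.update_of_ne (mem_erase.1 hj).1 _ _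
  have hwsum : ∑ j, w j = 1 := by
    rw [← add_sum_erase _ _ (mem_univ i), sum_congr rfl hw]; simp [w]
  rw [← sum_congr rfl fun j hj => congrArg (· • (q j - q i)) (hw j hj),
    ← sum_smul_eq_add_sum_smul_sub q i hwsum]
  refine (convex_convexHull ℝ _).sum_mem (fun j _ => ?_) hwsum
    fun j _ => subset_convexHull ℝ _ (Set.mem_range_self j)
  rcases eq_or_ne j i with rfl | hj
  · simpa [w] using h1
  · simpa [w, hj] using h0 j hj

end Convex

section LatticeSimplex

variable {n m : ℕ} (u : Fin m → Fin n → ℤ)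

theorem latLen_comm (i j : Fin m) : latLen u i j = latLen u j i :=
  Finset.gcd_congr rfl fun x _ => by rw [← Int.natAbs_neg, neg_sub]

@[simp]
theorem latLen_self (i : Fin m) : latLen u i i = 0 := by
  simp [latLen, Finset.gcd_eq_zero_iff]

theorem dvd_latLen {k : ℕ} {i j j' : Fin m} (h : k ∣ latLen u i j) (h' : k ∣ latLen u i j') :
    k ∣ latLen u j j' := by
  simp only [latLen, Finset.dvd_gcd_iff, mem_univ, forall_const, ← Int.natCast_dvd]
    at h h' ⊢
  intro x
  simpa using dvd_sub (h' x) (h x)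

theorem dilVert_of_ne {i j : Fin m} (k : ℕ) (hji : j ≠ i) (hl : latLen u i j ≠ 0) :
    dilVert u i k j = toR (u i) +
      (((latLen u i j : ℝ) - rmod u i j k) / latLen u i j) • (toR (u j) - toR (u i)) := by
  have hl' : (latLen u i j : ℝ) ≠ 0 := by exact_mod_cast hl
  rw [dilVert, if_neg hji]
  ext x
  simp only [Pi.add_apply, Pi.smul_apply, Pi.sub_apply, smul_eq_mul]
  field_simp
  ring

theorem dil_subset_lsimplex {i : Fin m} (k : ℕ) (hpos : ∀ j, j ≠ i → 0 < latLen u i j) :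
    dil u i k ⊆ lsimplex u := by
  refine convexHull_min ?_ (convex_convexHull ℝ _)
  rintro _ ⟨j, rfl⟩
  have hv : ∀ j, toR (u j) ∈ lsimplex u := fun j => subset_convexHull ℝ _ (Set.mem_range_self j)
  rcases eq_or_ne j i with rfl | hji
  · rw [dilVert, if_pos rfl]
    exact hv j
  · have hl : (0 : ℝ) < latLen u i j := by exact_mod_cast hpos j hji
    have hr : (rmod u i j k : ℝ) ≤ latLen u i j := by exact_mod_cast Nat.mod_le _ _
    rw [dilVert_of_ne u k hji (hpos j hji).ne']
    refine (convex_convexHull ℝ _).add_smul_sub_mem (hv i) (hv j) ⟨?_, ?_⟩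
    · exact div_nonneg (by linarith) hl.le
    · rw [div_le_one hl]
      linarith [(Nat.cast_nonneg _ : (0 : ℝ) ≤ rmod u i j k)]

theorem sum_smul_mem_dil {i : Fin m} {k : ℕ} (hk : 0 < k)
    (hkl : ∀ j, j ≠ i → k ≤ latLen u i j) {w : Fin m → ℝ} (hw1 : ∑ j, w j = 1)
    (hw0 : ∀ j, 0 ≤ w j)
    (h : ∑ j ∈ univ.erase i,
      w j * latLen u i j / ((latLen u i j : ℝ) - rmod u i j k) ≤ 1) :
    ∑ j, w j • toR (u j) ∈ dil u i k := by
  have hr : ∀ j, j ≠ i → (rmod u i j k : ℝ) < latLen u i j := fun j hj => by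
    exact_mod_cast (Nat.mod_lt _ hk).trans_le (hkl j hj)
  have hvi : dilVert u i k i = toR (u i) := if_pos rfl
  have key : ∀ j ∈ univ.erase i, w j • (toR (u j) - toR (u i)) =
      (w j * latLen u i j / ((latLen u i j : ℝ) - rmod u i j k)) •
        (dilVert u i k j - dilVert u i k i) := fun j hj => by
    have hji := (mem_erase.1 hj).1
    have hl : latLen u i j ≠ 0 := by have := hkl j hji; omega
    have hlr : (latLen u i j : ℝ) - rmod u i j k ≠ 0 := (sub_pos.2 (hr j hji)).ne'
    have hl' : (latLen u i j : ℝ) ≠ 0 := by exact_mod_cast hl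
    rw [hvi, dilVert_of_ne u k hji hl, add_sub_cancel_left, smul_smul]
    congr 1
    field_simp
  rw [sum_smul_eq_add_sum_smul_sub _ i hw1, sum_congr rfl key, ← hvi]
  refine add_sum_smul_sub_mem_convexHull _ i (fun j hj => ?_) h
  exact div_nonneg (mul_nonneg (hw0 j) (Nat.cast_nonneg _)) (sub_pos.2 (hr j hj)).le

theorem sum_smul_mem_dil_of_dvd {i t : Fin m} {k : ℕ} (hk : 0 < k)
    (hkl : ∀ j, j ≠ i → k ≤ latLen u i j) (hti : t ≠ i)
    (hdvd : ∀ j, j ≠ i → j ≠ t → k ∣ latLen u i j) {w : Fin m → ℝ} (hw1 : ∑ j, w j = 1)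
    (hw0 : ∀ j, 0 ≤ w j)
    (hwt : (rmod u i t k : ℝ) * w t ≤ ((latLen u i t : ℝ) - rmod u i t k) * w i) :
    ∑ j, w j • toR (u j) ∈ dil u i k := by
  refine sum_smul_mem_dil u hk hkl hw1 hw0 ?_
  calc ∑ j ∈ univ.erase i, w j * latLen u i j / ((latLen u i j : ℝ) - rmod u i j k)
      ≤ ∑ j ∈ univ.erase i, (w j + if j = t then w i else 0) :=
        sum_le_sum fun j hj => ?_
    _ = 1 := by
      rw [sum_add_distrib, sum_ite_eq',
        if_pos (mem_erase.2 ⟨hti, mem_univ t⟩),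
        sum_erase_add _ _ (mem_univ i), hw1]
  have hji := (mem_erase.1 hj).1
  have hl : (k : ℝ) ≤ latLen u i j := by exact_mod_cast hkl j hji
  have hk' : (0 : ℝ) < k := by exact_mod_cast hk
  rcases eq_or_ne j t with rfl | hjt
  · have hr : (rmod u i j k : ℝ) < k := by exact_mod_cast Nat.mod_lt _ hk
    rw [if_pos rfl, div_le_iff₀ (by linarith)]
    linarith
  · have hr : rmod u i j k = 0 := Nat.mod_eq_zero_of_dvd (hdvd j hji hjt)
    rw [if_neg hjt, hr, Nat.cast_zero, sub_zero, add_zero, mul_div_assoc,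
      div_self (by linarith), mul_one]

end LatticeSimplex

theorem three_mul_mod_three_le {L : ℕ} (hL : Odd L) (h3 : 3 ≤ L) :
    3 * ((L % 3 : ℕ) : ℝ) ≤ ((L : ℝ) - 1) * ((L : ℝ) - (L % 3 : ℕ)) := by
  obtain h | ⟨h, hL7⟩ | ⟨h, hL5⟩ : L % 3 = 0 ∨ (L % 3 = 1 ∧ 7 ≤ L) ∨ (L % 3 = 2 ∧ 5 ≤ L) := by
    obtain ⟨k, rfl⟩ := hL
    omega
  · have : (3 : ℝ) ≤ L := by exact_mod_cast h3
    rw [h, Nat.cast_zero]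
    nlinarith
  · have : (7 : ℝ) ≤ L := by exact_mod_cast hL7
    rw [h, Nat.cast_one]
    nlinarith
  · have : (5 : ℝ) ≤ L := by exact_mod_cast hL5
    rw [h, Nat.cast_ofNat]
    nlinarith

theorem mul_div_sub_mod_two_le {L : ℕ} (hL : 2 ≤ L) {a b : ℝ} (hb : 0 ≤ b)
    (h : Odd L → ((L : ℝ) - (L % 3 : ℕ)) * a ≤ (L % 3 : ℕ) * b) :
    a * L / ((L : ℝ) - (L % 2 : ℕ)) ≤ a + b / 3 := by
  rcases Nat.even_or_odd L with hev | hLodd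
  · have hL' : (L : ℝ) ≠ 0 := by exact_mod_cast (show L ≠ 0 by omega)
    rw [Nat.even_iff.1 hev, Nat.cast_zero, sub_zero, mul_div_assoc, div_self hL', mul_one]
    linarith
  · have h3 : 3 ≤ L := by obtain ⟨k, rfl⟩ := hLodd; omega
    have hL3 : (3 : ℝ) ≤ L := by exact_mod_cast h3
    have hrL : ((L % 3 : ℕ) : ℝ) < L := by exact_mod_cast (Nat.mod_lt L three_pos).trans_le h3
    have hkey := three_mul_mod_three_le hLodd h3
    have hab : 3 * a ≤ ((L : ℝ) - 1) * b := by
      refine le_of_mul_le_mul_right ?_ (sub_pos.2 hrL)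
      nlinarith [h hLodd, mul_le_mul_of_nonneg_right hkey hb]
    rw [Nat.odd_iff.1 hLodd, Nat.cast_one, div_le_iff₀ (by linarith)]
    linarith

theorem sum_smul_mem_dil_two {n : ℕ} {u : Fin 4 → Fin n → ℤ} {t : Fin 4}
    (hlen : ∀ j, j ≠ t → 2 ≤ latLen u t j) {w : Fin 4 → ℝ} (hw1 : ∑ j, w j = 1)
    (hw0 : ∀ j, 0 ≤ w j)
    (hodd : ∀ j, j ≠ t → Odd (latLen u t j) →
      ((latLen u t j : ℝ) - (latLen u t j % 3 : ℕ)) * w j ≤ (latLen u t j % 3 : ℕ) * w t) :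
    ∑ j, w j • toR (u j) ∈ dil u t 2 := by
  refine sum_smul_mem_dil u two_pos hlen hw1 hw0 ?_
  calc ∑ j ∈ univ.erase t, w j * latLen u t j / ((latLen u t j : ℝ) - rmod u t j 2)
      ≤ ∑ j ∈ univ.erase t, (w j + w t / 3) :=
        sum_le_sum fun j hj =>
          have hjt := (mem_erase.1 hj).1
          mul_div_sub_mod_two_le (hlen j hjt) (hw0 t) (hodd j hjt)
    _ = 1 := by
      rw [sum_add_distrib, sum_const, card_erase_of_mem (mem_univ t),
        card_univ, Fintype.card_fin, nsmul_eq_mul]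
      linarith [sum_erase_add _ w (mem_univ t)]

section Dimension3

variable {n : ℕ} {u : Fin 4 → Fin n → ℤ}

theorem three_dvd_latLen (h01 : 3 ∣ latLen u 0 1) (h02 : 3 ∣ latLen u 0 2) {i j : Fin 4}
    (hi : i ≠ 3) (hj : j ≠ 3) : 3 ∣ latLen u i j := by
  have h0 : ∀ i : Fin 4, i ≠ 3 → 3 ∣ latLen u 0 i := by
    intro i hi
    fin_cases i <;> simp_all
  exact dvd_latLen u (h0 i hi) (h0 j hj)

theorem three_le_latLen (hlen : ∀ i j, i ≠ j → 2 ≤ latLen u i j) (h01 : 3 ∣ latLen u 0 1)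
    (h02 : 3 ∣ latLen u 0 2) {i j : Fin 4} (hi : i ≠ 3) (hi2 : latLen u i 3 ≠ 2) (hji : j ≠ i) :
    3 ≤ latLen u i j := by
  have := hlen i j hji.symm
  rcases eq_or_ne j 3 with rfl | hj
  · omega
  · have := three_dvd_latLen h01 h02 hi hj
    omega

theorem lsimplex_subset_union (hlen : ∀ i j, i ≠ j → 2 ≤ latLen u i j)
    (h01 : 3 ∣ latLen u 0 1) (h02 : 3 ∣ latLen u 0 2) :
    lsimplex u ⊆ (⋃ i ∈ {i : Fin 4 | i ≠ 3 ∧ latLen u i 3 ≠ 2}, dil u i 3) ∪ dil u 3 2 := by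
  intro x hx
  rw [lsimplex, convexHull_range_eq_image_stdSimplex] at hx
  obtain ⟨w, ⟨hw0, hw1⟩, rfl⟩ := hx
  by_cases h : ∃ i ∈ {i : Fin 4 | i ≠ 3 ∧ latLen u i 3 ≠ 2},
      (rmod u i 3 3 : ℝ) * w 3 ≤ ((latLen u i 3 : ℝ) - rmod u i 3 3) * w i
  · obtain ⟨i, ⟨hi3, hi2⟩, hwi⟩ := h
    refine Or.inl (Set.mem_iUnion₂.2 ⟨i, ⟨hi3, hi2⟩, ?_⟩)
    exact sum_smul_mem_dil_of_dvd u three_pos (fun j => three_le_latLen hlen h01 h02 hi3 hi2)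
      hi3.symm (fun j _ hj3 => three_dvd_latLen h01 h02 hi3 hj3) hw1 hw0 hwi
  · push Not at h
    refine Or.inr (sum_smul_mem_dil_two (fun j hj => hlen 3 j hj.symm) hw1 hw0 fun j hj hodd => ?_)
    rw [latLen_comm u 3 j] at hodd ⊢
    have hj2 : latLen u j 3 ≠ 2 := fun h2 => by rw [h2] at hodd; exact absurd hodd (by decide)
    exact (h j ⟨hj, hj2⟩).le

end Dimension3

theorem dim3_special_case_general
    (u : Fin 4 → Fin 3 → ℤ)
    (hlen : ∀ i j, i ≠ j → 2 ≤ latLen u i j)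
    (h01 : latLen u 0 1 = 3) (h02 : latLen u 0 2 = 3)
    (h03 : Odd (latLen u 0 3))
    (S : Set (Fin 4))
    (hS : S = {i : Fin 4 | i ≠ 3 ∧ latLen u i 3 ≠ 2}) :
    3 ∣ latLen u 1 2 ∧
    3 ≤ latLen u 0 3 ∧
    (∀ i ∈ S, 3 ≤ latLen u i 3) ∧
    (∀ i ∈ S, ∀ j, j ≠ i → 3 ≤ latLen u i j) ∧
    lsimplex u = (⋃ i ∈ S, dil u i 3) ∪ dil u 3 2 := by
  subst hS
  have h01' : 3 ∣ latLen u 0 1 := by rw [h01]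
  have h02' : 3 ∣ latLen u 0 2 := by rw [h02]
  have h03' : latLen u 0 3 ≠ 2 := fun h => by rw [h] at h03; exact absurd h03 (by decide)
  have hpos : ∀ i j, j ≠ i → 0 < latLen u i j := fun i j hji => by
    have := hlen i j hji.symm
    omega
  refine ⟨three_dvd_latLen h01' h02' (by decide) (by decide),
    three_le_latLen hlen h01' h02' (by decide) h03' (by decide),
    fun i hi => three_le_latLen hlen h01' h02' hi.1 hi.2 hi.1.symm,
    fun i hi j hji => three_le_latLen hlen h01' h02' hi.1 hi.2 hji,
    (lsimplex_subset_union hlen h01' h02').antisymm ?_⟩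
  exact Set.union_subset (Set.iUnion₂_subset fun i _ => dil_subset_lsimplex u 3 (hpos i))
    (dil_subset_lsimplex u 2 (hpos 3))

/-- in dimension 3, if `l_{01} = l_{02} = 3` and `l_{03}` is odd, and
`S = {i ∈ {0,1,2} : l_{i3} ≠ 2}`, then the dilations `P_{i,3}` for `i ∈ S` are defined
(in particular `3 ∣ l_{12}`, `l_{03} ≥ 3`, and `l_{i3} ≥ 3` for `i ∈ S`), and
`P = (⋃_{i∈S} P_{i,3}) ∪ P_{3,2}`. -/
theorem dim3_special_case
    (u : Fin 4 → Fin 3 → ℤ)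
    (hind : AffineIndependent ℝ fun i => toR (u i))
    (hlen : ∀ i j, i ≠ j → 2 ≤ latLen u i j)
    (h01 : latLen u 0 1 = 3) (h02 : latLen u 0 2 = 3)
    (h03 : Odd (latLen u 0 3))
    (S : Set (Fin 4))
    (hS : S = {i : Fin 4 | i ≠ 3 ∧ latLen u i 3 ≠ 2}) :
    3 ∣ latLen u 1 2 ∧
    3 ≤ latLen u 0 3 ∧
    (∀ i ∈ S, 3 ≤ latLen u i 3) ∧
    (∀ i ∈ S, ∀ j, j ≠ i → 3 ≤ latLen u i j) ∧
    lsimplex u = (⋃ i ∈ S, dil u i 3) ∪ dil u 3 2 :=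
  dim3_special_case_general u hlen h01 h02 h03 S hS
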